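/- Let 𝒜_1 be the 4-pattern whose squares are S_{0,j,4} for j = 0,1,2,3 together with S_{i,2,4} for i = 1,2,3, and let 𝒜_2 be the 5-pattern whose squares are S_{i,0,5} for i = 0,…,4 together with S_{1,j,5} for j = 1,…,4; set 𝒜_k = 𝒜_2 for all k ≥ 3. Then 𝒜_1 and 𝒜_2 are labyrinth patterns, the left exit of the resulting mixed labyrinth fractal L_∞ is the point (0, 1/2), and this point lies in exactly two squares of 𝒲_1 and in exactly one square of 𝒲_n for every n ≥ 2. -/

import Mathlib

open Set

namespace Labyrinth

/-- The closed square `S_{i,j,m} = [i/m,(i+1)/m] × [j/m,(j+1)/m]` of the `m × m` grid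
on the unit square, indexed by `p = (i,j)`. -/
def cell (m : ℕ) (p : ℕ × ℕ) : Set (ℝ × ℝ) :=
  Icc ((p.1 : ℝ) / (m : ℝ)) (((p.1 : ℝ) + 1) / (m : ℝ)) ×ˢ
    Icc ((p.2 : ℝ) / (m : ℝ)) (((p.2 : ℝ) + 1) / (m : ℝ))

/-- An `m`-pattern: a nonempty set of grid indices within the `m × m` grid. -/
def IsPattern (m : ℕ) (A : Set (ℕ × ℕ)) : Prop :=
  A.Nonempty ∧ ∀ p ∈ A, p.1 < m ∧ p.2 < m

/-- Two grid squares share a side. -/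
def SideAdj (p q : ℕ × ℕ) : Prop :=
  (p.1 = q.1 ∧ (p.2 + 1 = q.2 ∨ q.2 + 1 = p.2)) ∨
  (p.2 = q.2 ∧ (p.1 + 1 = q.1 ∨ q.1 + 1 = p.1))

/-- Two grid squares share a side or a corner. -/
def CornerAdj (p q : ℕ × ℕ) : Prop :=
  SideAdj p q ∨
  ((p.1 + 1 = q.1 ∨ q.1 + 1 = p.1) ∧ (p.2 + 1 = q.2 ∨ q.2 + 1 = p.2))

/-- The graph `𝒢(𝒜)` of a pattern: vertices are its squares, two squares being
adjacent iff they share a side. -/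
def patternGraph (A : Set (ℕ × ℕ)) : SimpleGraph ↥A where
  Adj p q := SideAdj p.1 q.1
  symm := by
    constructor
    rintro ⟨p, hp⟩ ⟨q, hq⟩ h
    rcases h with ⟨h1, h2⟩ | ⟨h1, h2⟩
    · exact Or.inl ⟨h1.symm, h2.symm⟩
    · exact Or.inr ⟨h1.symm, h2.symm⟩
  loopless := by
    constructor
    rintro ⟨p, hp⟩ h
    rcases h with ⟨h1, h2 | h2⟩ | ⟨h1, h2 | h2⟩ <;> omega

/-- The four sides of a square/pattern. -/
inductive Side | top | bottom | left | right
deriving DecidableEq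

/-- `p` is an exit square of the `m`-pattern `A` on the given side. -/
def IsExitSq (m : ℕ) (A : Set (ℕ × ℕ)) : Side → ℕ × ℕ → Prop
  | .top, p => p ∈ A ∧ p.2 = m - 1 ∧ (p.1, 0) ∈ A
  | .bottom, p => p ∈ A ∧ p.2 = 0 ∧ (p.1, m - 1) ∈ A
  | .left, p => p ∈ A ∧ p.1 = 0 ∧ (m - 1, p.2) ∈ A
  | .right, p => p ∈ A ∧ p.1 = m - 1 ∧ (0, p.2) ∈ A

/-- An `m × m`-labyrinth pattern: a nonempty `m`-pattern, `m ≥ 3`, whose graph is a tree,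
with exactly one vertical and exactly one horizontal exit pair, and no two white squares
at diagonally opposite corners. -/
def IsLabyrinthPattern (m : ℕ) (A : Set (ℕ × ℕ)) : Prop :=
  3 ≤ m ∧ IsPattern m A ∧ (patternGraph A).IsTree ∧
    (∃! i : ℕ, (i, m - 1) ∈ A ∧ (i, 0) ∈ A) ∧
    (∃! j : ℕ, (0, j) ∈ A ∧ (m - 1, j) ∈ A) ∧
    ((0, 0) ∈ A → (m - 1, m - 1) ∉ A) ∧
    ((m - 1, 0) ∈ A → (0, m - 1) ∉ A)

/-- A wild labyrinth pattern: the graph is merely connected, and there is at least one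
vertical and at least one horizontal exit pair. -/
def IsWildLabyrinthPattern (m : ℕ) (A : Set (ℕ × ℕ)) : Prop :=
  3 ≤ m ∧ IsPattern m A ∧ (patternGraph A).Connected ∧
    (∃ i : ℕ, (i, m - 1) ∈ A ∧ (i, 0) ∈ A) ∧
    (∃ j : ℕ, (0, j) ∈ A ∧ (m - 1, j) ∈ A) ∧
    ((0, 0) ∈ A → (m - 1, m - 1) ∉ A) ∧
    ((m - 1, 0) ∈ A → (0, m - 1) ∉ A)

/-- One substitution step: place a copy of the pattern `A'` (of width `m'`) into each
white square of `W`. -/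
def subst (m' : ℕ) (A' W : Set (ℕ × ℕ)) : Set (ℕ × ℕ) :=
  {q | ∃ p ∈ W, ∃ r ∈ A', q = (p.1 * m' + r.1, p.2 * m' + r.2)}

/-- The white squares `𝒲_n` of level `n`; `whites m A n` is the paper's `𝒲_n`, where
`A k` is the paper's pattern `𝒜_{k+1}` of width `m k = m_{k+1}`; level `0` is the whole
unit square. -/
def whites (m : ℕ → ℕ) (A : ℕ → Set (ℕ × ℕ)) : ℕ → Set (ℕ × ℕ)
  | 0 => {(0, 0)}
  | n + 1 => subst (m n) (A n) (whites m A n)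

/-- `m(n) = m_1 ⋯ m_n`. -/
def mProd (m : ℕ → ℕ) (n : ℕ) : ℕ := ∏ k ∈ Finset.range n, m k

/-- The black squares `ℬ_n` of level `n`. -/
def blacks (m : ℕ → ℕ) (A : ℕ → Set (ℕ × ℕ)) (n : ℕ) : Set (ℕ × ℕ) :=
  {p : ℕ × ℕ | p.1 < mProd m n ∧ p.2 < mProd m n} \ whites m A n

/-- A border square of the `m × m` grid. -/
def IsBorder (m : ℕ) (p : ℕ × ℕ) : Prop :=
  p.1 = 0 ∨ p.2 = 0 ∨ p.1 = m - 1 ∨ p.2 = m - 1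

/-- `L_n`, the union of the white squares of level `n`. -/
def levelSet (m : ℕ → ℕ) (A : ℕ → Set (ℕ × ℕ)) (n : ℕ) : Set (ℝ × ℝ) :=
  ⋃ p ∈ whites m A n, cell (mProd m n) p

/-- `L_∞ = ⋂_{n ≥ 1} L_n` (the term `n = 0` is the whole unit square). -/
def limitSet (m : ℕ → ℕ) (A : ℕ → Set (ℕ × ℕ)) : Set (ℝ × ℝ) :=
  ⋂ n, levelSet m A n

def unitSquare : Set (ℝ × ℝ) := Icc (0 : ℝ) 1 ×ˢ Icc (0 : ℝ) 1

/-- A path in a graph (with adjacency `Adj`, within the vertex set `A`)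
from `u` to `v`: a nonempty list of distinct, consecutively adjacent squares of `A`,
starting at `u` and ending at `v`. -/
def IsPathIn (Adj : ℕ × ℕ → ℕ × ℕ → Prop) (A : Set (ℕ × ℕ))
    (l : List (ℕ × ℕ)) (u v : ℕ × ℕ) : Prop :=
  l ≠ [] ∧ l.Nodup ∧ l.Chain' Adj ∧ (∀ p ∈ l, p ∈ A) ∧
    l.head? = some u ∧ l.getLast? = some v

/-- `s` is an arc between `a` and `b`: a homeomorphic image of `[0,1]`
with endpoints `a` and `b`. -/
def IsArc (s : Set (ℝ × ℝ)) (a b : ℝ × ℝ) : Prop :=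
  ∃ f : ℝ → ℝ × ℝ, ContinuousOn f (Icc 0 1) ∧ InjOn f (Icc 0 1) ∧
    f '' Icc 0 1 = s ∧ f 0 = a ∧ f 1 = b

/-- `e` is the exit point of `L_∞` of the given type: for every `n ≥ 1` it lies in the
exit square of that type of `𝒲_n`. -/
def IsExitPoint (m : ℕ → ℕ) (A : ℕ → Set (ℕ × ℕ)) (s : Side) (e : ℝ × ℝ) : Prop :=
  ∀ n, 1 ≤ n → ∃ p, IsExitSq (mProd m n) (whites m A n) s p ∧ e ∈ cell (mProd m n) p

/-- The (closed) edge of the grid square `p` of the `m × m` grid on the given side. -/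
def cellEdge (m : ℕ) (p : ℕ × ℕ) : Side → Set (ℝ × ℝ)
  | .top => Icc ((p.1 : ℝ) / (m : ℝ)) (((p.1 : ℝ) + 1) / (m : ℝ)) ×ˢ {((p.2 : ℝ) + 1) / (m : ℝ)}
  | .bottom => Icc ((p.1 : ℝ) / (m : ℝ)) (((p.1 : ℝ) + 1) / (m : ℝ)) ×ˢ {(p.2 : ℝ) / (m : ℝ)}
  | .left => {(p.1 : ℝ) / (m : ℝ)} ×ˢ Icc ((p.2 : ℝ) / (m : ℝ)) (((p.2 : ℝ) + 1) / (m : ℝ))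
  | .right => {((p.1 : ℝ) + 1) / (m : ℝ)} ×ˢ Icc ((p.2 : ℝ) / (m : ℝ)) (((p.2 : ℝ) + 1) / (m : ℝ))

/-- Directions in the grid. -/
inductive Dir | up | down | left | right
deriving DecidableEq

/-- `stepDir p q d`: the square `q` is the neighbour of `p` in direction `d`. -/
def stepDir (p q : ℕ × ℕ) : Dir → Prop
  | .up => q.1 = p.1 ∧ q.2 = p.2 + 1
  | .down => q.1 = p.1 ∧ p.2 = q.2 + 1
  | .left => q.2 = p.2 ∧ p.1 = q.1 + 1
  | .right => q.2 = p.2 ∧ q.1 = p.1 + 1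

/-- The outward direction through a given side. -/
def outDir : Side → Dir
  | .top => .up
  | .bottom => .down
  | .left => .left
  | .right => .right

def sideOfDir : Dir → Side
  | .up => .top
  | .down => .bottom
  | .left => .left
  | .right => .right

/-- The six types `A, B, C, D, E, F` of paths (and of squares within a path). -/
inductive PTy | A | B | C | D | E | F
deriving DecidableEq

instance : Fintype PTy :=
  ⟨{PTy.A, PTy.B, PTy.C, PTy.D, PTy.E, PTy.F}, by intro x; cases x <;> simp⟩

/-- The exit at which the `x`-path starts: `A`: top→bottom, `B`: left→right,
`C`: top→right, `D`: right→bottom, `E`: bottom→left, `F`: left→top. -/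
def startSide : PTy → Side
  | .A => .top
  | .B => .left
  | .C => .top
  | .D => .right
  | .E => .bottom
  | .F => .left

/-- The exit at which the `x`-path ends. -/
def endSide : PTy → Side
  | .A => .bottom
  | .B => .right
  | .C => .right
  | .D => .bottom
  | .E => .left
  | .F => .top

/-- The two neighbour directions characterising a square of each type. -/
def ptyDirPair : PTy → Dir × Dir
  | .A => (.up, .down)
  | .B => (.left, .right)
  | .C => (.up, .right)
  | .D => (.right, .down)
  | .E => (.down, .left)
  | .F => (.left, .up)

def ptyDirs (τ : PTy) : Set Dir := {(ptyDirPair τ).1, (ptyDirPair τ).2}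

/-- The set of directions from the `i`-th square of the path `l` towards its neighbours
within the path, where the first and last squares (exit squares) are regarded as having
an additional neighbour outside the unit square, in directions `dstart`, `dend`
respectively. -/
def pathDirs (l : List (ℕ × ℕ)) (dstart dend : Dir) (i : ℕ) : Set Dir :=
  {d | (∃ p q, l[i]? = some p ∧ l[i - 1]? = some q ∧ 0 < i ∧ stepDir p q d)
    ∨ (∃ p q, l[i]? = some p ∧ l[i + 1]? = some q ∧ stepDir p q d)
    ∨ (i = 0 ∧ d = dstart)
    ∨ (i + 1 = l.length ∧ d = dend)}

/-- The number of `τ`-squares of the path `l` (with outward exit directions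
`dstart`, `dend`). -/
noncomputable def countTy (l : List (ℕ × ℕ)) (dstart dend : Dir) (τ : PTy) : ℕ :=
  {i | i < l.length ∧ pathDirs l dstart dend i = ptyDirs τ}.ncard

/-- `M(n) = M_1 ⋅ M_2 ⋅ ⋯ ⋅ M_n`. -/
def matProd (M : ℕ → Matrix PTy PTy ℕ) (n : ℕ) : Matrix PTy PTy ℕ :=
  ((List.range n).map M).prod

/-- A simple closed curve: a subspace homeomorphic to the circle. -/
def IsSimpleClosedCurve (s : Set (ℝ × ℝ)) : Prop :=
  Nonempty (↥s ≃ₜ AddCircle (1 : ℝ))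

/-- The number of `δ`-mesh squares meeting `E`. -/
noncomputable def meshCount (δ : ℝ) (E : Set (ℝ × ℝ)) : ℕ :=
  {q : ℤ × ℤ | (E ∩ (Icc ((q.1 : ℝ) * δ) (((q.1 : ℝ) + 1) * δ) ×ˢ
      Icc ((q.2 : ℝ) * δ) (((q.2 : ℝ) + 1) * δ))).Nonempty}.ncard

/-- The lower box-counting dimension of `E ⊆ ℝ²`. -/
noncomputable def lowerBoxDim (E : Set (ℝ × ℝ)) : ℝ :=
  Filter.liminf (fun δ : ℝ => Real.log (meshCount δ E) / (-Real.log δ)) (nhdsWithin 0 (Ioi 0))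

/-- The upper box-counting dimension of `E ⊆ ℝ²`. -/
noncomputable def upperBoxDim (E : Set (ℝ × ℝ)) : ℝ :=
  Filter.limsup (fun δ : ℝ => Real.log (meshCount δ E) / (-Real.log δ)) (nhdsWithin 0 (Ioi 0))

end Labyrinth
namespace Labyrinth

/-- The `4`-pattern `𝒜_1` of the counterexample: the full left column together with the
squares `S_{i,2,4}`, `i = 1,2,3`. -/
def pat1 : Set (ℕ × ℕ) :=
  {p | (p.1 = 0 ∧ p.2 < 4) ∨ (p.2 = 2 ∧ 1 ≤ p.1 ∧ p.1 < 4)}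

/-- The `5`-pattern `𝒜_2` of the counterexample: the full bottom row together with the
squares `S_{1,j,5}`, `j = 1,…,4`. -/
def pat2 : Set (ℕ × ℕ) :=
  {p | (p.2 = 0 ∧ p.1 < 5) ∨ (p.1 = 1 ∧ 1 ≤ p.2 ∧ p.2 < 5)}

end Labyrinth

/-
The horizontal exit pair of `𝒜_2` lies in its bottom row, so substituting `𝒜_2` into the left
exit square `(0, j)` of `𝒲_n` yields the left exit square `(0, 5j)` of `𝒲_{n+1}`. Starting from
`(0, 2)` in the `4 × 4` grid, the left exit square of `𝒲_n` is `(0, 2·5^{n-1})` in the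
`4·5^{n-1}` grid, whose lower-left corner is `(0, 1/2)`. The only other square of that grid
containing `(0, 1/2)` is the one directly below. In `𝒲_1` it is white; for `n ≥ 2` it is black,
because `𝒜_2` meets its left column only in the corner square, so every white square of `𝒲_n`
in the left column has a row index divisible by `5`.
-/

/- The map `v ↦ s(v, par v)` is a bijection from the non-root vertices onto the edges, so the
connected graph `G` has one edge fewer than vertices. -/
theorem SimpleGraph.isTree_of_parent {V : Type*} [Finite V] {G : SimpleGraph V} (r : V)
    (par : V → V) (f : V → ℕ) (hr : par r = r) (hadj : ∀ v, v ≠ r → G.Adj v (par v))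
    (hf : ∀ v, v ≠ r → f (par v) < f v) (hedge : ∀ u v, G.Adj u v → par u = v ∨ par v = u) :
    G.IsTree := by
  classical
  have hreach : ∀ v, G.Reachable v r := by
    intro v
    induction h : f v using Nat.strong_induction_on generalizing v with
    | _ n ih =>
      by_cases hv : v = r
      · exact hv ▸ Reachable.refl v
      · exact (hadj v hv).reachable.trans (ih _ (h ▸ hf v hv) _ rfl)
  let parentEdge : {v // v ≠ r} → G.edgeSet := fun v => ⟨s(v, par v), hadj v v.2⟩
  have hbij : Function.Bijective parentEdge := by
    constructor
    · rintro ⟨v, hv⟩ ⟨w, hw⟩ h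
      have h' : s(v, par v) = s(w, par w) := congrArg Subtype.val h
      rcases Sym2.eq_iff.1 h' with ⟨h, -⟩ | ⟨hvw, hwv⟩
      · exact Subtype.ext h
      · have h₁ := hf v hv
        have h₂ := hf w hw
        rw [hwv] at h₁
        rw [← hvw] at h₂
        omega
    · rintro ⟨e, he⟩
      induction e using Sym2.ind with
      | _ u v =>
      have hne : ∀ {x y}, G.Adj x y → par x = y → x ≠ r := fun hxy hp hx =>
        hxy.ne (by rw [← hp, hx, hr])
      rcases hedge u v he with h | h
      · exact ⟨⟨u, hne he h⟩, by simp [parentEdge, h]⟩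
      · exact ⟨⟨v, hne he.symm h⟩, by simp [parentEdge, h, Sym2.eq_swap]⟩
  rw [isTree_iff_connected_and_card]
  refine ⟨(connected_iff_exists_forall_reachable G).2 ⟨r, fun v => (hreach v).symm⟩, ?_⟩
  rw [← Nat.card_congr (Equiv.ofBijective _ hbij), ← Finite.card_option,
    Nat.card_congr (Equiv.optionSubtypeNe r)]

namespace Labyrinth

theorem IsPattern.finite {m : ℕ} {A : Set (ℕ × ℕ)} (h : IsPattern m A) : A.Finite :=
  ((Set.finite_Iio m).prod (Set.finite_Iio m)).subset fun p hp => h.2 p hp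

theorem patternGraph_isTree_of_parent {A : Set (ℕ × ℕ)} (hA : A.Finite) {r : ℕ × ℕ}
    (hr : r ∈ A) (par : ℕ × ℕ → ℕ × ℕ) (f : ℕ × ℕ → ℕ) (hpar_r : par r = r)
    (hmem : ∀ p ∈ A, par p ∈ A) (hadj : ∀ p ∈ A, p ≠ r → SideAdj p (par p))
    (hf : ∀ p ∈ A, p ≠ r → f (par p) < f p)
    (hedge : ∀ p ∈ A, ∀ q ∈ A, SideAdj p q → par p = q ∨ par q = p) :
    (patternGraph A).IsTree :=
  have := hA.to_subtype
  SimpleGraph.isTree_of_parent ⟨r, hr⟩ (fun p => ⟨par p, hmem p p.2⟩) (fun p => f p)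
    (Subtype.ext hpar_r) (fun p hp => hadj p p.2 (Subtype.coe_ne_coe.2 hp))
    (fun p hp => hf p p.2 (Subtype.coe_ne_coe.2 hp))
    (fun p q h => (hedge p p.2 q q.2 h).imp Subtype.ext Subtype.ext)

def leftThenDown (p : ℕ × ℕ) : ℕ × ℕ := if p.1 = 0 then (0, p.2 - 1) else (p.1 - 1, p.2)

def downThenLeft (p : ℕ × ℕ) : ℕ × ℕ := if p.2 = 0 then (p.1 - 1, 0) else (p.1, p.2 - 1)

theorem isPattern_pat1 : IsPattern 4 pat1 :=
  ⟨⟨(0, 0), by simp [pat1]⟩, fun p hp => by simp only [pat1, mem_ofPred_eq] at hp; omega⟩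

theorem isPattern_pat2 : IsPattern 5 pat2 :=
  ⟨⟨(0, 0), by simp [pat2]⟩, fun p hp => by simp only [pat2, mem_ofPred_eq] at hp; omega⟩

theorem patternGraph_pat1_isTree : (patternGraph pat1).IsTree := by
  refine patternGraph_isTree_of_parent isPattern_pat1.finite (r := (0, 0)) (by simp [pat1])
    leftThenDown (fun p => p.1 + p.2) rfl ?_ ?_ ?_ ?_ <;>
  simp only [pat1, leftThenDown, SideAdj, mem_ofPred_eq, ne_eq, Prod.forall, Prod.mk.injEq] <;>
  intros <;> grind

theorem patternGraph_pat2_isTree : (patternGraph pat2).IsTree := by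
  refine patternGraph_isTree_of_parent isPattern_pat2.finite (r := (0, 0)) (by simp [pat2])
    downThenLeft (fun p => p.1 + p.2) rfl ?_ ?_ ?_ ?_ <;>
  simp only [pat2, downThenLeft, SideAdj, mem_ofPred_eq, ne_eq, Prod.forall, Prod.mk.injEq] <;>
  intros <;> grind

theorem snd_eq_zero_of_mem_pat2 : ∀ r ∈ pat2, r.1 = 0 → r.2 = 0 := fun r hr hr₁ => by
  simp only [pat2, mem_ofPred_eq] at hr
  omega

theorem isLabyrinthPattern_pat1 : IsLabyrinthPattern 4 pat1 := by
  refine ⟨by norm_num, isPattern_pat1, patternGraph_pat1_isTree,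
    ⟨0, ?_, ?_⟩, ⟨2, ?_, ?_⟩, ?_, ?_⟩ <;> simp [pat1]

theorem isLabyrinthPattern_pat2 : IsLabyrinthPattern 5 pat2 := by
  refine ⟨by norm_num, isPattern_pat2, patternGraph_pat2_isTree,
    ⟨1, ?_, ?_⟩, ⟨0, ?_, ?_⟩, ?_, ?_⟩ <;> simp [pat2]

theorem whites_one (m : ℕ → ℕ) (A : ℕ → Set (ℕ × ℕ)) : whites m A 1 = A 0 := by
  ext q
  simp only [whites, subst, mem_singleton_iff, exists_eq_left, mem_ofPred_eq, zero_mul, zero_add,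
    exists_eq_right']

theorem mProd_succ_of_const {m : ℕ → ℕ} {a b : ℕ} (hm0 : m 0 = a)
    (hm : ∀ k, 1 ≤ k → m k = b) (k : ℕ) : mProd m (k + 1) = a * b ^ k := by
  induction k with
  | zero => simp [mProd, hm0]
  | succ k ih =>
    rw [mProd, Finset.prod_range_succ, ← mProd, ih, hm _ k.succ_pos, pow_succ, mul_assoc]

theorem mem_subst {m' : ℕ} {A' W : Set (ℕ × ℕ)} {p r : ℕ × ℕ} (hp : p ∈ W) (hr : r ∈ A') :
    (p.1 * m' + r.1, p.2 * m' + r.2) ∈ subst m' A' W :=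
  ⟨p, hp, r, hr, rfl⟩

theorem isExitSq_left_subst {M m' j i : ℕ} {A' W : Set (ℕ × ℕ)} (hM : 0 < M) (hm' : 0 < m')
    (hW : IsExitSq M W .left (0, j)) (hL : (0, i) ∈ A') (hR : (m' - 1, i) ∈ A') :
    IsExitSq (M * m') (subst m' A' W) .left (0, j * m' + i) := by
  obtain ⟨hleft, -, hright⟩ := hW
  refine ⟨by simpa using mem_subst hleft hL, rfl, ?_⟩
  convert mem_subst hright hR using 2
  obtain ⟨M, rfl⟩ := Nat.exists_eq_add_of_lt hM
  obtain ⟨m', rfl⟩ := Nat.exists_eq_add_of_lt hm'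
  simp only [Nat.add_sub_cancel, zero_add]
  ring_nf
  omega

theorem dvd_snd_of_mem_subst {m' : ℕ} {A' W : Set (ℕ × ℕ)} {q : ℕ × ℕ}
    (hA' : ∀ r ∈ A', r.1 = 0 → r.2 = 0) (hq : q ∈ subst m' A' W) (hq₁ : q.1 = 0) : m' ∣ q.2 := by
  obtain ⟨p, -, r, hr, rfl⟩ := hq
  have hr₁ : r.1 = 0 := by simp only at hq₁; omega
  simp [hA' r hr hr₁]

theorem isExitSq_left_whites_of_const {m : ℕ → ℕ} {A : ℕ → Set (ℕ × ℕ)} {a b j : ℕ}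
    {A₀ B : Set (ℕ × ℕ)} (ha : 0 < a) (hb : 0 < b) (hm0 : m 0 = a) (hm : ∀ k, 1 ≤ k → m k = b)
    (hA0 : A 0 = A₀) (hA : ∀ k, 1 ≤ k → A k = B) (h₀ : IsExitSq a A₀ .left (0, j))
    (hL : (0, 0) ∈ B) (hR : (b - 1, 0) ∈ B) (k : ℕ) :
    IsExitSq (mProd m (k + 1)) (whites m A (k + 1)) .left (0, j * b ^ k) := by
  induction k with
  | zero => simpa [mProd_succ_of_const hm0 hm, whites_one, hA0] using h₀
  | succ k ih =>
    have hstep : whites m A (k + 2) = subst b B (whites m A (k + 1)) := by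
      rw [whites, hm _ k.succ_pos, hA _ k.succ_pos]
    rw [hstep, mProd_succ_of_const hm0 hm, pow_succ, ← mul_assoc, ← mul_assoc]
    rw [mProd_succ_of_const hm0 hm] at ih
    simpa using isExitSq_left_subst (by positivity) hb ih hL hR

theorem zero_half_mem_cell_iff {K : ℕ} (hK : 0 < K) {p : ℕ × ℕ} :
    ((0 : ℝ), (1 / 2 : ℝ)) ∈ cell (2 * K) p ↔ p.1 = 0 ∧ (p.2 + 1 = K ∨ p.2 = K) := by
  have hpos : (0 : ℝ) < ((2 * K : ℕ) : ℝ) := by positivity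
  have hhalf : (1 / 2 : ℝ) * ((2 * K : ℕ) : ℝ) = K := by push_cast; ring
  simp only [cell, mem_prod, mem_Icc]
  rw [div_le_iff₀ hpos, le_div_iff₀ hpos, div_le_iff₀ hpos, le_div_iff₀ hpos, zero_mul, hhalf]
  constructor
  · rintro ⟨⟨h₁, -⟩, h₂, h₃⟩
    have h₁ : p.1 ≤ 0 := by exact_mod_cast h₁
    have h₂ : p.2 ≤ K := by exact_mod_cast h₂
    have h₃ : K ≤ p.2 + 1 := by exact_mod_cast h₃
    omega
  · rintro ⟨h₁, h₂ | h₂⟩ <;> subst h₂ <;> push_cast [h₁] <;> norm_num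

theorem setOf_zero_half_mem_cell {K : ℕ} (hK : 0 < K) (W : Set (ℕ × ℕ)) :
    {p ∈ W | ((0 : ℝ), (1 / 2 : ℝ)) ∈ cell (2 * K) p} = {(0, K - 1), (0, K)} ∩ W := by
  ext ⟨a, b⟩
  simp only [mem_ofPred_eq, zero_half_mem_cell_iff hK, mem_inter_iff, mem_insert_iff,
    mem_singleton_iff, Prod.mk.injEq]
  exact and_comm.trans (and_congr_left' (by omega))

end Labyrinth

open Labyrinth in
/-- for the sequence `𝒜_1 = pat1`, `𝒜_k = pat2` for `k ≥ 2`, both patterns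
are labyrinth patterns, the left exit of the resulting mixed labyrinth fractal is
`(0, 1/2)`, and this point lies in exactly two squares of `𝒲_1` and in exactly one
square of `𝒲_n` for every `n ≥ 2`. -/
theorem left_exit_counterexample (m : ℕ → ℕ) (A : ℕ → Set (ℕ × ℕ))
    (hm0 : m 0 = 4) (hm : ∀ k, 1 ≤ k → m k = 5)
    (hA0 : A 0 = pat1) (hA : ∀ k, 1 ≤ k → A k = pat2) :
    IsLabyrinthPattern 4 pat1 ∧ IsLabyrinthPattern 5 pat2 ∧
    IsExitPoint m A Side.left ((0 : ℝ), (1 / 2 : ℝ)) ∧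
    {p ∈ whites m A 1 | ((0 : ℝ), (1 / 2 : ℝ)) ∈ cell (mProd m 1) p}.ncard = 2 ∧
    (∀ n, 2 ≤ n →
      {p ∈ whites m A n | ((0 : ℝ), (1 / 2 : ℝ)) ∈ cell (mProd m n) p}.ncard = 1) := by
  have hM (k : ℕ) : mProd m (k + 1) = 2 * (2 * 5 ^ k) := by
    rw [mProd_succ_of_const hm0 hm]; ring
  have hK (k : ℕ) : 0 < 2 * 5 ^ k := by positivity
  have hexit (k : ℕ) : IsExitSq (mProd m (k + 1)) (whites m A (k + 1)) .left (0, 2 * 5 ^ k) :=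
    isExitSq_left_whites_of_const (by norm_num) (by norm_num) hm0 hm hA0 hA
      (by simp [IsExitSq, pat1]) (by simp [pat2]) (by simp [pat2]) k
  have hgap (k : ℕ) : (0, 2 * 5 ^ (k + 1) - 1) ∉ whites m A (k + 2) := fun h => by
    have h5 : 5 ∣ 2 * (5 ^ k * 5) - 1 := by
      rw [whites, hm _ k.succ_pos, hA _ k.succ_pos] at h
      simpa [pow_succ] using dvd_snd_of_mem_subst snd_eq_zero_of_mem_pat2 h rfl
    have := hK k
    omega
  refine ⟨isLabyrinthPattern_pat1, isLabyrinthPattern_pat2, fun n hn => ?_, ?_, fun n hn => ?_⟩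
  · obtain ⟨k, rfl⟩ := Nat.exists_eq_add_of_le' hn
    exact ⟨_, hexit k, hM k ▸ (zero_half_mem_cell_iff (hK k)).2 ⟨rfl, Or.inr rfl⟩⟩
  · rw [hM 0, setOf_zero_half_mem_cell (hK 0), whites_one, hA0, inter_eq_left.2, ncard_pair]
    · simp
    · simp [insert_subset_iff, pat1]
  · obtain ⟨k, rfl⟩ := Nat.exists_eq_add_of_le' hn
    rw [hM (k + 1), setOf_zero_half_mem_cell (hK _), insert_inter_of_notMem (hgap k),
      singleton_inter_of_mem (hexit (k + 1)).1, ncard_singleton]
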